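/- arXiv:1409.1306 — 4 statements merged into one kernel-verified Lean document; each statement's English description precedes it below -/
import Mathlib

section
/- Let Φ : S → T be a surjective bounded linear map between Banach spaces, let S₀ be a dense subspace of S with Φ(S₀) = T₀, and let Φ₀ : S₀ → T₀ be the restriction. If Φ₀ maps the open unit ball of S₀ onto the open unit ball of T₀, then the closure of ker Φ₀ equals ker Φ and Φ maps the open unit ball of S onto the open unit ball of T. -/
/-- quotient lemma: Let `Φ : S → T` be a surjective bounded linear map
between Banach spaces, `S₀` a dense subspace of `S`, `T₀ = Φ(S₀)`, and suppose the
restriction `Φ₀` maps the open unit ball of `S₀` onto the open unit ball of `T₀`.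
Then the closure of `ker Φ₀` is `ker Φ`, and `Φ` maps the open unit ball of `S`
onto the open unit ball of `T`. -/
theorem quotient_lemma
    {S T : Type*} [NormedAddCommGroup S] [NormedSpace ℝ S] [CompleteSpace S]
    [NormedAddCommGroup T] [NormedSpace ℝ T] [CompleteSpace T]
    (Φ : S →L[ℝ] T) (hsurj : Function.Surjective Φ)
    (S₀ : Submodule ℝ S) (hdense : Dense (S₀ : Set S))
    (hball : Φ '' {x : S | x ∈ S₀ ∧ ‖x‖ < 1} =
      {y : T | y ∈ Submodule.map (Φ : S →ₗ[ℝ] T) S₀ ∧ ‖y‖ < 1}) :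
    closure {x : S | x ∈ S₀ ∧ Φ x = 0} = {x : S | Φ x = 0} ∧
    Φ '' Metric.ball (0 : S) 1 = Metric.ball (0 : T) 1 := by
  -- norm bound on S₀
  have hnorm0 : ∀ x ∈ S₀, ‖Φ x‖ ≤ ‖x‖ := by
    intro x hx
    by_contra h
    push_neg at h
    set t : ℝ := (‖x‖ + ‖Φ x‖) / 2 with ht
    have hxt : ‖x‖ < t := by
      have := norm_nonneg (Φ x); unfold t; linarith
    have htΦ : t < ‖Φ x‖ := by unfold t; linarith
    have ht0 : 0 < t := lt_of_le_of_lt (norm_nonneg x) hxt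
    have hmem : Φ (t⁻¹ • x) ∈ Φ '' {x : S | x ∈ S₀ ∧ ‖x‖ < 1} := by
      refine ⟨t⁻¹ • x, ⟨S₀.smul_mem _ hx, ?_⟩, rfl⟩
      rw [norm_smul, norm_inv, Real.norm_of_nonneg ht0.le]
      rw [inv_mul_lt_iff₀ ht0, mul_one]; exact hxt
    rw [hball] at hmem
    have : ‖Φ (t⁻¹ • x)‖ < 1 := hmem.2
    rw [map_smul, norm_smul, norm_inv, Real.norm_of_nonneg ht0.le,
      inv_mul_lt_iff₀ ht0, mul_one] at this
    linarith
  -- norm bound everywhere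
  have hnorm : ∀ x : S, ‖Φ x‖ ≤ ‖x‖ := by
    have hcl : IsClosed {x : S | ‖Φ x‖ ≤ ‖x‖} :=
      isClosed_le (by continuity) (by continuity)
    intro x
    have : (S₀ : Set S) ⊆ {x : S | ‖Φ x‖ ≤ ‖x‖} := fun z hz => hnorm0 z hz
    have hx : x ∈ closure (S₀ : Set S) := hdense x
    exact (closure_minimal this hcl) hx
  -- scaled preimage lemma
  have hpre : ∀ y ∈ Submodule.map (Φ : S →ₗ[ℝ] T) S₀, ∀ r : ℝ, ‖y‖ < r →
      ∃ x ∈ S₀, Φ x = y ∧ ‖x‖ < r := by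
    intro y hy r hr
    have hr0 : 0 < r := lt_of_le_of_lt (norm_nonneg y) hr
    have hmem : r⁻¹ • y ∈ {y : T | y ∈ Submodule.map (Φ : S →ₗ[ℝ] T) S₀ ∧ ‖y‖ < 1} := by
      refine ⟨Submodule.smul_mem _ _ hy, ?_⟩
      rw [norm_smul, norm_inv, Real.norm_of_nonneg hr0.le, inv_mul_lt_iff₀ hr0, mul_one]
      exact hr
    rw [← hball] at hmem
    obtain ⟨x, ⟨hxS, hx1⟩, hΦx⟩ := hmem
    refine ⟨r • x, S₀.smul_mem _ hxS, ?_, ?_⟩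
    · rw [map_smul, hΦx, smul_smul, mul_inv_cancel₀ hr0.ne', one_smul]
    · rw [norm_smul, Real.norm_of_nonneg hr0.le]
      calc r * ‖x‖ < r * 1 := by exact mul_lt_mul_of_pos_left hx1 hr0
        _ = r := mul_one r
  -- part (a)
  have parta : closure {x : S | x ∈ S₀ ∧ Φ x = 0} = {x : S | Φ x = 0} := by
    apply le_antisymm
    · apply closure_minimal
      · exact fun z hz => hz.2
      · exact isClosed_eq (by continuity) continuous_const
    · intro x hx
      rw [Metric.mem_closure_iff]
      intro ε hε
      obtain ⟨s₀, hs₀S, hs₀⟩ : ∃ s₀ ∈ (S₀ : Set S), dist x s₀ < ε / 2 := by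
        have := Metric.mem_closure_iff.mp (hdense x) (ε / 2) (by linarith)
        exact this
      have hΦs₀ : ‖Φ s₀‖ < ε / 2 := by
        simp only [Set.mem_setOf_eq] at hx
        have : Φ s₀ = Φ (s₀ - x) := by rw [map_sub, hx, sub_zero]
        rw [this]
        calc ‖Φ (s₀ - x)‖ ≤ ‖s₀ - x‖ := hnorm _
          _ = dist x s₀ := by rw [dist_eq_norm, norm_sub_rev]
          _ < ε / 2 := hs₀
      obtain ⟨u, huS, hΦu, hu⟩ := hpre (Φ s₀) ⟨s₀, hs₀S, rfl⟩ (ε / 2) hΦs₀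
      refine ⟨s₀ - u, ⟨S₀.sub_mem hs₀S huS, by simp [map_sub, hΦu]⟩, ?_⟩
      calc dist x (s₀ - u) ≤ dist x s₀ + dist s₀ (s₀ - u) := dist_triangle _ _ _
        _ < ε / 2 + ε / 2 := by
            apply add_lt_add hs₀
            rw [dist_eq_norm]; simpa using hu
        _ = ε := by ring
  refine ⟨parta, ?_⟩
  -- part (b)
  apply Set.eq_of_subset_of_subset
  · rintro y ⟨x, hx, rfl⟩
    rw [Metric.mem_ball, dist_zero_right] at *
    exact lt_of_le_of_lt (hnorm x) hx
  · intro y hy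
    rw [Metric.mem_ball, dist_zero_right] at hy
    by_cases hy0 : y = 0
    · exact ⟨0, by simp [hy0, Metric.mem_ball], by simp [hy0]⟩
    have hyn : 0 < ‖y‖ := norm_pos_iff.mpr hy0
    -- the NormedAddGroupHom
    set f : NormedAddGroupHom S T :=
      AddMonoidHom.mkNormedAddGroupHom ((Φ : S →ₗ[ℝ] T).toAddMonoidHom) 1
        (fun v => by simpa using hnorm v) with hf
    have hfx : ∀ x, f x = Φ x := fun x => rfl
    set K : AddSubgroup T := (Submodule.map (Φ : S →ₗ[ℝ] T) S₀).toAddSubgroup with hK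
    set d : ℝ := (1 / ‖y‖ - 1) / 3 with hd
    have hd0 : 0 < d := by
      have : 1 < 1 / ‖y‖ := by rw [lt_div_iff₀ hyn]; linarith
      unfold d; linarith
    have hyp : f.SurjectiveOnWith K (1 + d) := by
      intro h hh
      by_cases h0 : h = 0
      · exact ⟨0, by simp [h0, hfx], by simp [h0]⟩
      have hhn : 0 < ‖h‖ := norm_pos_iff.mpr h0
      have : ‖h‖ < (1 + d) * ‖h‖ := by nlinarith
      obtain ⟨x, _, hΦx, hxn⟩ := hpre h hh ((1 + d) * ‖h‖) this
      exact ⟨x, by rw [hfx]; exact hΦx, hxn.le⟩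
    have hclosed : f.SurjectiveOnWith K.topologicalClosure (1 + d + d) :=
      controlled_closure_of_complete (by linarith) hd0 hyp
    have hyK : y ∈ K.topologicalClosure := by
      have hdT : Dense ((Submodule.map (Φ : S →ₗ[ℝ] T) S₀ : Submodule ℝ T) : Set T) := by
        have h1 : Set.range Φ ⊆ closure (Φ '' (S₀ : Set S)) := by
          rintro _ ⟨x, rfl⟩
          have hx : x ∈ closure (S₀ : Set S) := hdense x
          exact map_mem_closure Φ.continuous hx (fun z hz => Set.mem_image_of_mem _ hz)
        intro t
        have : t ∈ Set.range Φ := hsurj t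
        have := h1 this
        simpa [Submodule.map_coe] using this
      show y ∈ closure (K : Set T)
      exact hdT y
    obtain ⟨x, hfxy, hxle⟩ := hclosed y hyK
    refine ⟨x, ?_, by rw [← hfx]; exact hfxy⟩
    rw [Metric.mem_ball, dist_zero_right]
    calc ‖x‖ ≤ (1 + d + d) * ‖y‖ := hxle
      _ < 1 := by
        have : (1 + 2 * d) * ‖y‖ < 1 := by
          have h2d : 2 * d * ‖y‖ = 2 * (1 - ‖y‖) / 3 := by
            unfold d; field_simp
          nlinarith
        nlinarith
end

section
/- Let V⁺ ⊆ ℝ³ be the cone generated by {(x, y, 1) : (x−1)² + y² ≤ 1, y ≥ 0} together with the origin. Then V⁺ is a closed convex cone, the element (1,1,2) is an order unit for the induced order on ℝ³ (viewing ℝ³ as the self-adjoint part of ℂ³), and the projection P(x,y,z) = (x,y) maps V⁺ onto a set whose closure is the positive quadrant {(x,y) : x ≥ 0, y ≥ 0}, but P(V⁺) does not contain the point (0,1) (equivalently, the fiber of (0, 1) under P does not intersect V⁺). -/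
/-!
In the coordinates `(a, b, c)` the cone `V⁺` is `{b ≥ 0, ‖(c - a, b)‖ ≤ c}`, i.e. the intersection of a
half-space with a linear preimage of the Lorentz cone; closedness, convexity and additivity follow, and
`(1, 1, 2)` is an interior point, hence an order unit. Over a point `(u, v)` of the quadrant the fibre
of `V⁺` consists of the `(u, v, c)` with `u² + v² ≤ 2uc`: for `u > 0` it is nonempty, while for
`u = 0` it forces `v = 0`.
-/

/-- The half-disk `{(x, y, 1) : (x−1)² + y² ≤ 1, y ≥ 0}` at height 1 in `ℝ³`. -/
def halfDisk : Set (ℝ × ℝ × ℝ) :=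
  {p | (p.1 - 1) ^ 2 + p.2.1 ^ 2 ≤ 1 ∧ 0 ≤ p.2.1 ∧ p.2.2 = 1}

/-- The cone `V⁺ ⊆ ℝ³` generated by the half-disk and the origin. -/
def Vplus : Set (ℝ × ℝ × ℝ) :=
  {p | ∃ lam : ℝ, 0 ≤ lam ∧ ∃ s ∈ halfDisk, p = lam • s}

open Set Filter Topology

theorem exists_pos_smul_sub_mem_of_mem_interior {E : Type*} [AddCommGroup E] [Module ℝ E]
    [TopologicalSpace E] [ContinuousSub E] [ContinuousSMul ℝ E] {K : Set E}
    (hK : ∀ c : ℝ, 0 < c → ∀ p ∈ K, c • p ∈ K) {e : E} (he : e ∈ interior K) (v : E) :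
    ∃ r : ℝ, 0 < r ∧ r • e - v ∈ K := by
  have hlim : Tendsto (fun t : ℝ => e - t • v) (𝓝[>] 0) (𝓝 e) :=
    ((show Continuous fun t : ℝ => e - t • v by fun_prop).tendsto' 0 e (by simp)).mono_left
      nhdsWithin_le_nhds
  obtain ⟨t, htK, ht⟩ :=
    ((hlim.eventually (isOpen_interior.mem_nhds he)).and self_mem_nhdsWithin).exists
  refine ⟨t⁻¹, inv_pos.2 ht, ?_⟩
  have h := hK t⁻¹ (inv_pos.2 ht) _ (interior_subset htK)
  rwa [smul_sub, smul_smul, inv_mul_cancel₀ ht.ne', one_smul] at h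

theorem Complex.norm_mk_le_iff {x y c : ℝ} (hc : 0 ≤ c) :
    ‖(⟨x, y⟩ : ℂ)‖ ≤ c ↔ x ^ 2 + y ^ 2 ≤ c ^ 2 := by
  rw [← sq_le_sq₀ (norm_nonneg _) hc, Complex.sq_norm, Complex.normSq_mk]
  simp only [sq]

theorem mem_Vplus_iff {p : ℝ × ℝ × ℝ} :
    p ∈ Vplus ↔ 0 ≤ p.2.1 ∧ 0 ≤ p.2.2 ∧ p.1 ^ 2 + p.2.1 ^ 2 ≤ 2 * p.1 * p.2.2 := by
  obtain ⟨a, b, c⟩ := p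
  constructor
  · rintro ⟨t, ht, ⟨x, y, z⟩, ⟨hxy, hy, rfl : z = 1⟩, h⟩
    simp only [Prod.smul_mk, smul_eq_mul, Prod.mk.injEq, mul_one] at h
    obtain ⟨rfl, rfl, rfl⟩ := h
    refine ⟨mul_nonneg ht hy, ht, ?_⟩
    nlinarith [mul_le_mul_of_nonneg_left hxy (sq_nonneg c)]
  · rintro ⟨hb, hc, h⟩
    rcases hc.eq_or_lt with rfl | hc
    · have ha : a = 0 := by nlinarith
      have hb : b = 0 := by nlinarith
      exact ⟨0, le_rfl, (1, 0, 1), by norm_num [halfDisk], by simp [ha, hb]⟩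
    · refine ⟨c, hc.le, (a / c, b / c, 1), ⟨?_, by positivity, rfl⟩, ?_⟩
      · rw [div_sub_one hc.ne', div_pow, div_pow, ← add_div, div_le_one (by positivity)]
        nlinarith
      · simp [mul_div_cancel₀ _ hc.ne']

theorem mem_Vplus_iff_norm {p : ℝ × ℝ × ℝ} :
    p ∈ Vplus ↔ 0 ≤ p.2.1 ∧ ‖(⟨p.2.2 - p.1, p.2.1⟩ : ℂ)‖ ≤ p.2.2 := by
  rw [mem_Vplus_iff]
  constructor
  · rintro ⟨hb, hc, h⟩
    exact ⟨hb, (Complex.norm_mk_le_iff hc).2 (by nlinarith)⟩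
  · rintro ⟨hb, h⟩
    have hc := (norm_nonneg _).trans h
    exact ⟨hb, hc, by nlinarith [(Complex.norm_mk_le_iff hc).1 h]⟩

theorem smul_mem_Vplus {c : ℝ} (hc : 0 ≤ c) {p : ℝ × ℝ × ℝ} (hp : p ∈ Vplus) :
    c • p ∈ Vplus := by
  obtain ⟨t, ht, s, hs, rfl⟩ := hp
  exact ⟨c * t, mul_nonneg hc ht, s, hs, (mul_smul c t s).symm⟩

theorem add_mem_Vplus {p q : ℝ × ℝ × ℝ} (hp : p ∈ Vplus) (hq : q ∈ Vplus) :
    p + q ∈ Vplus := by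
  rw [mem_Vplus_iff_norm] at hp hq ⊢
  refine ⟨add_nonneg hp.1 hq.1, ?_⟩
  calc ‖(⟨(p + q).2.2 - (p + q).1, (p + q).2.1⟩ : ℂ)‖
      = ‖(⟨p.2.2 - p.1, p.2.1⟩ : ℂ) + ⟨q.2.2 - q.1, q.2.1⟩‖ := by
        congr 1
        exact Complex.ext (by simp only [Prod.fst_add, Prod.snd_add, Complex.add_re]; ring) rfl
    _ ≤ ‖(⟨p.2.2 - p.1, p.2.1⟩ : ℂ)‖ + ‖(⟨q.2.2 - q.1, q.2.1⟩ : ℂ)‖ := norm_add_le _ _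
    _ ≤ (p + q).2.2 := add_le_add hp.2 hq.2

theorem convex_Vplus : Convex ℝ Vplus := fun _ hp _ hq _ _ hs ht _ =>
  add_mem_Vplus (smul_mem_Vplus hs hp) (smul_mem_Vplus ht hq)

theorem isClosed_Vplus : IsClosed Vplus := by
  rw [show Vplus = {p | 0 ≤ p.2.1 ∧ 0 ≤ p.2.2 ∧ p.1 ^ 2 + p.2.1 ^ 2 ≤ 2 * p.1 * p.2.2} from
    ext fun _ => mem_Vplus_iff]
  exact (isClosed_le (by fun_prop) (by fun_prop)).and
    ((isClosed_le (by fun_prop) (by fun_prop)).and (isClosed_le (by fun_prop) (by fun_prop)))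

theorem mem_interior_Vplus : ((1, 1, 2) : ℝ × ℝ × ℝ) ∈ interior Vplus := by
  have hopen : IsOpen
      {p : ℝ × ℝ × ℝ | 0 < p.2.1 ∧ 0 < p.2.2 ∧ p.1 ^ 2 + p.2.1 ^ 2 < 2 * p.1 * p.2.2} :=
    (isOpen_lt (by fun_prop) (by fun_prop)).and
      ((isOpen_lt (by fun_prop) (by fun_prop)).and (isOpen_lt (by fun_prop) (by fun_prop)))
  refine interior_maximal (fun p hp => ?_) hopen (by norm_num)
  exact mem_Vplus_iff.2 ⟨hp.1.le, hp.2.1.le, hp.2.2.le⟩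

theorem image_Vplus_subset :
    (fun p : ℝ × ℝ × ℝ => (p.1, p.2.1)) '' Vplus ⊆ Ici 0 ×ˢ Ici 0 := by
  rintro _ ⟨⟨a, b, c⟩, hp, rfl⟩
  obtain ⟨hb, hc, h⟩ := mem_Vplus_iff.1 hp
  exact ⟨show 0 ≤ a by nlinarith, hb⟩

theorem Ioi_prod_Ici_subset_image_Vplus :
    Ioi 0 ×ˢ Ici 0 ⊆ (fun p : ℝ × ℝ × ℝ => (p.1, p.2.1)) '' Vplus := by
  rintro ⟨u, v⟩ ⟨hu : 0 < u, hv : 0 ≤ v⟩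
  refine ⟨(u, v, (u ^ 2 + v ^ 2) / (2 * u)), mem_Vplus_iff.2 ⟨hv, by positivity, ?_⟩, rfl⟩
  rw [mul_div_cancel₀ _ (by positivity)]

theorem closure_image_Vplus :
    closure ((fun p : ℝ × ℝ × ℝ => (p.1, p.2.1)) '' Vplus) = Ici 0 ×ˢ Ici 0 := by
  refine (closure_minimal image_Vplus_subset (isClosed_Ici.prod isClosed_Ici)).antisymm ?_
  calc Ici (0 : ℝ) ×ˢ Ici (0 : ℝ) = closure (Ioi 0 ×ˢ Ici 0) := by
        rw [closure_prod_eq, closure_Ioi, closure_Ici]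
    _ ⊆ _ := closure_mono Ioi_prod_Ici_subset_image_Vplus

theorem zero_one_notMem_image_Vplus :
    ((0, 1) : ℝ × ℝ) ∉ (fun p : ℝ × ℝ × ℝ => (p.1, p.2.1)) '' Vplus := by
  rintro ⟨⟨a, b, c⟩, hp, h⟩
  obtain ⟨rfl, rfl⟩ := Prod.mk.inj h
  have := (mem_Vplus_iff.1 hp).2.2
  norm_num at this

/-- `V⁺` is a closed convex cone, `(1,1,2)` is an order unit
(it lies in the interior of `V⁺`, and every element of `ℝ³` is dominated by a positive
multiple of it), the closure of the image of `V⁺` under the projection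
`P(x,y,z) = (x,y)` is the positive quadrant, but `(0,1)` is not in the image of `V⁺`. -/
theorem cone_Vplus_properties :
    IsClosed Vplus ∧ Convex ℝ Vplus ∧
    (∀ (c : ℝ), 0 ≤ c → ∀ p ∈ Vplus, c • p ∈ Vplus) ∧
    (∀ p ∈ Vplus, ∀ q ∈ Vplus, p + q ∈ Vplus) ∧
    ((1, 1, 2) : ℝ × ℝ × ℝ) ∈ interior Vplus ∧
    (∀ v : ℝ × ℝ × ℝ, ∃ r : ℝ, 0 < r ∧ r • ((1, 1, 2) : ℝ × ℝ × ℝ) - v ∈ Vplus) ∧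
    closure ((fun p : ℝ × ℝ × ℝ => (p.1, p.2.1)) '' Vplus) =
      {q : ℝ × ℝ | 0 ≤ q.1 ∧ 0 ≤ q.2} ∧
    ((0, 1) : ℝ × ℝ) ∉ (fun p : ℝ × ℝ × ℝ => (p.1, p.2.1)) '' Vplus :=
  ⟨isClosed_Vplus, convex_Vplus, fun _ hc _ hp => smul_mem_Vplus hc hp,
    fun _ hp _ hq => add_mem_Vplus hp hq, mem_interior_Vplus,
    exists_pos_smul_sub_mem_of_mem_interior (fun _ hc _ hp => smul_mem_Vplus hc.le hp)
      mem_interior_Vplus,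
    closure_image_Vplus, zero_one_notMem_image_Vplus⟩
end

section
/- For every ε > 0 and every element (a₁, a₂) ∈ (ℝ≥0)² viewed in ℓ∞², the element (a₁ + ε, a₂ + ε) of ℝ² lifts under the projection P(x,y,z) = (x,y) to an element of the cone V⁺ ⊆ ℝ³ generated by {(x,y,1) : (x−1)² + y² ≤ 1, y ≥ 0} and the origin; that is, there exists z ∈ ℝ with (a₁ + ε, a₂ + ε, z) ∈ V⁺. Hence P : (ℝ³, V⁺) → (ℝ², positive quadrant) is an order quotient map in the sense that every strictly positive element of ℝ² lifts to a positive element of ℝ³. -/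
theorem mem_Vplus_of_sq_add_sq_le {x y z : ℝ} (hy : 0 ≤ y) (hz : 0 < z)
    (h : x ^ 2 + y ^ 2 ≤ 2 * x * z) : ((x, y, z) : ℝ × ℝ × ℝ) ∈ Vplus := by
  refine ⟨z, hz.le, (x / z, y / z, 1), ⟨?_, div_nonneg hy hz.le, rfl⟩, ?_⟩
  · rw [div_sub_one hz.ne', div_pow, div_pow, ← add_div, div_le_one (by positivity)]
    nlinarith
  · simp [mul_div_cancel₀ _ hz.ne']

theorem lift_mem_Vplus {x y : ℝ} (hx : 0 < x) (hy : 0 ≤ y) :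
    ((x, y, (x ^ 2 + y ^ 2) / (2 * x)) : ℝ × ℝ × ℝ) ∈ Vplus :=
  mem_Vplus_of_sq_add_sq_le hy (by positivity) (mul_div_cancel₀ _ (by positivity)).ge

/-- For every `ε > 0` and `(a₁, a₂)` with `a₁, a₂ ≥ 0`, the element
`(a₁ + ε, a₂ + ε)` lifts under `P(x,y,z) = (x,y)` to an element of `V⁺`; hence every
strictly positive element of `ℝ²` lifts to a positive element of `ℝ³`. -/
theorem strictly_positive_lifts_to_Vplus :
    (∀ (ε : ℝ), 0 < ε → ∀ a₁ a₂ : ℝ, 0 ≤ a₁ → 0 ≤ a₂ →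
      ∃ z : ℝ, ((a₁ + ε, a₂ + ε, z) : ℝ × ℝ × ℝ) ∈ Vplus) ∧
    (∀ b : ℝ × ℝ, 0 < b.1 → 0 < b.2 →
      ∃ v ∈ Vplus, (v.1, v.2.1) = b) :=
  ⟨fun _ hε _ _ h₁ h₂ => ⟨_, lift_mem_Vplus (by linarith) (by linarith)⟩,
    fun _ hb₁ hb₂ => ⟨_, lift_mem_Vplus hb₁ hb₂.le, rfl⟩⟩
end

section
/- Let T = [[U, B],[C, D]] be an operator matrix acting on a direct sum of Hilbert spaces H₁ ⊕ H₂, with ‖T‖ ≤ 1 and U : H₁ → H₁ unitary. Then B = 0 and C = 0. -/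
/-- If the operator matrix `T = [[U, B],[C, D]]` on `H₁ ⊕ H₂` is a
contraction (`‖T(x,y)‖ ≤ ‖(x,y)‖` in the ℓ²-sum norm) and `U` is unitary, then
`B = 0` and `C = 0`. -/
theorem contraction_with_unitary_corner_has_zero_offdiagonal
    {H₁ H₂ : Type*}
    [NormedAddCommGroup H₁] [InnerProductSpace ℂ H₁] [CompleteSpace H₁]
    [NormedAddCommGroup H₂] [InnerProductSpace ℂ H₂] [CompleteSpace H₂]
    (U : H₁ →L[ℂ] H₁) (B : H₂ →L[ℂ] H₁) (C : H₁ →L[ℂ] H₂) (D : H₂ →L[ℂ] H₂)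
    (hU : U ∈ unitary (H₁ →L[ℂ] H₁))
    (hT : ∀ (x : H₁) (y : H₂),
      ‖U x + B y‖ ^ 2 + ‖C x + D y‖ ^ 2 ≤ ‖x‖ ^ 2 + ‖y‖ ^ 2) :
    B = 0 ∧ C = 0 := by
  have hnorm : ∀ x : H₁, ‖U x‖ = ‖x‖ := fun x =>
    ContinuousLinearMap.norm_map_of_mem_unitary hU x
  have hsurj : ∀ z : H₁, ∃ x : H₁, U x = z := by
    intro z
    refine ⟨(star U) z, ?_⟩
    have := congrArg (fun (S : H₁ →L[ℂ] H₁) => S z) hU.2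
    simpa [ContinuousLinearMap.mul_apply] using this
  -- C = 0
  have hC : C = 0 := by
    ext x
    have h := hT x 0
    simp only [map_zero, add_zero, norm_zero] at h
    rw [hnorm x] at h
    have : ‖C x‖ = 0 := by nlinarith [norm_nonneg (C x)]
    simpa using norm_eq_zero.mp this
  refine ⟨?_, hC⟩
  -- B = 0
  ext y
  by_contra hBy
  have hBy' : (0:ℝ) < ‖B y‖ := by
    simp only [ContinuousLinearMap.zero_apply] at hBy
    exact norm_pos_iff.mpr hBy
  have key : ∀ t : ℝ, 0 < t → 2 * t * ‖B y‖ ^ 2 + ‖B y‖ ^ 2 ≤ ‖y‖ ^ 2 := by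
    intro t ht
    obtain ⟨x, hx⟩ := hsurj (t • B y)
    have h := hT x y
    rw [hx] at h
    have hxnorm : ‖x‖ = t * ‖B y‖ := by
      rw [← hnorm x, hx, norm_smul, Real.norm_eq_abs, abs_of_pos ht]
    have hexp : ‖t • B y + B y‖ ^ 2 = (t + 1) ^ 2 * ‖B y‖ ^ 2 := by
      have e1 : t • B y + B y = (t + 1) • B y := by
        rw [add_smul, one_smul]
      rw [e1, norm_smul, Real.norm_eq_abs, abs_of_pos (by linarith : (0:ℝ) < t + 1)]
      ring
    rw [hexp, hxnorm] at h
    nlinarith [sq_nonneg (‖C x + D y‖)]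
  have h1 := key ((‖y‖ ^ 2 + 1) / ‖B y‖ ^ 2) (by positivity)
  have h2 : 2 * ((‖y‖ ^ 2 + 1) / ‖B y‖ ^ 2) * ‖B y‖ ^ 2 = 2 * (‖y‖ ^ 2 + 1) := by
    field_simp
  rw [h2] at h1
  nlinarith [sq_nonneg ‖B y‖]
end
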